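/- arXiv:2602.12842 — 3 statements merged into one kernel-verified Lean document; each statement's English description precedes it below -/
import Mathlib

section
/- Let m₁, m₂ ≥ 2 be integers, q, s ∈ (0,1), ρ ∈ [−1,1], and δ ∈ {−1,1}. Then the double sum over k ∈ {0,…,m₁−1} and l ∈ {0,…,m₂−1} of (q^k + q^{m₁−k})(s^l + s^{m₂−l})·(1 + ρ·cos(2πk/m₁ − δ·2πl/m₂)) equals (1−q^{m₁})(1−s^{m₂})(1+q)(1+s) · [ 1/((1−q)(1−s)) + ρ·(1−q)(1−s)/((q² − 2q·cos(2π/m₁) + 1)(s² − 2s·cos(2π/m₂) + 1)) ]. -/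
open Real Finset

/-!
Expanding `cos (x - δ y) = cos x cos y + δ sin x sin y` (as `δ = ±1`) splits the double sum into
products of single sums with weights `q ^ k + q ^ (m - k)`. These single sums are the real and
imaginary parts of `∑ (q ^ k + q ^ (m - k)) ζ ^ k` with `ζ = exp (2πi / m)`, which is a sum of two
geometric series; since `ζ ^ m = 1` it equals `(1 - q ^ m) (1 - q ^ 2) ζ / ((1 - q ζ) (ζ - q))`,
and `(1 - q ζ) (ζ - q) = ζ |1 - q ζ| ^ 2` turns this into a real number, so the sine sums vanish.
-/

theorem sum_range_pow_add_pow_sub_mul_pow_mul {R : Type*} [CommRing R] {m : ℕ} {q w : R}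
    (hw : w ^ m = 1) :
    (∑ k ∈ range m, (q ^ k + q ^ (m - k)) * w ^ k) * ((1 - q * w) * (w - q)) =
      (1 - q ^ m) * (1 - q ^ 2) * w := by
  have hreflect : ∑ k ∈ range m, q ^ (m - k) * w ^ k =
      q * ∑ k ∈ range m, w ^ k * q ^ (m - 1 - k) := by
    rw [mul_sum]
    refine sum_congr rfl fun k hk => ?_
    rw [show m - k = m - 1 - k + 1 by have := mem_range.mp hk; omega, pow_succ]
    ring
  have hfirst := geom_sum_mul (q * w) m
  have hsecond := geom_sum₂_mul w q m
  simp only [add_mul, sum_add_distrib, ← mul_pow]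
  rw [hreflect]
  rw [mul_pow, hw] at hfirst
  rw [hw] at hsecond
  linear_combination (q - w) * hfirst + q * (1 - q * w) * hsecond

theorem sum_range_pow_add_pow_sub {K : Type*} [Field K] (m : ℕ) {q : K} (hq : q ≠ 1) :
    ∑ k ∈ range m, (q ^ k + q ^ (m - k)) = (1 - q ^ m) * (1 + q) / (1 - q) := by
  have h := sum_range_pow_add_pow_sub_mul_pow_mul (q := q) (one_pow m)
  have h1q : 1 - q ≠ 0 := sub_ne_zero.mpr hq.symm
  simp only [one_pow, mul_one] at h
  rw [eq_div_iff h1q]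
  apply mul_right_cancel₀ h1q
  linear_combination h

theorem one_sub_mul_exp_mul_exp_sub (q θ : ℝ) :
    (1 - q * Complex.exp (θ * Complex.I)) * (Complex.exp (θ * Complex.I) - q) =
      Complex.exp (θ * Complex.I) * ((q ^ 2 - 2 * q * Real.cos θ + 1 : ℝ) : ℂ) := by
  have h := Complex.two_cos (θ : ℂ)
  have hinv : Complex.exp (θ * Complex.I) * Complex.exp (-θ * Complex.I) = 1 := by
    rw [← Complex.exp_add]; simp
  push_cast
  linear_combination (q : ℂ) * Complex.exp (θ * Complex.I) * h + q * hinv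

theorem sq_sub_two_mul_mul_cos_add_one_pos {q : ℝ} (hq : |q| ≠ 1) (θ : ℝ) :
    0 < q ^ 2 - 2 * q * Real.cos θ + 1 := by
  have hcos : q * Real.cos θ ≤ |q| := by
    calc q * Real.cos θ ≤ |q * Real.cos θ| := le_abs_self _
      _ ≤ |q| := by rw [abs_mul]; exact mul_le_of_le_one_right (abs_nonneg q) (abs_cos_le_one θ)
  have hpos : 0 < (|q| - 1) ^ 2 := by
    have : |q| - 1 ≠ 0 := sub_ne_zero.mpr hq
    positivity
  nlinarith [sq_abs q]

theorem sum_range_pow_add_pow_sub_mul_exp (m : ℕ) {q : ℝ}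
    (hq : q ^ 2 - 2 * q * Real.cos (2 * π / m) + 1 ≠ 0) :
    ∑ k ∈ range m, ((q ^ k + q ^ (m - k) : ℝ) : ℂ) * Complex.exp ((2 * π * k / m : ℝ) * Complex.I) =
      (((1 - q ^ m) * (1 - q ^ 2) / (q ^ 2 - 2 * q * Real.cos (2 * π / m) + 1) : ℝ) : ℂ) := by
  have hpow (k : ℕ) : Complex.exp ((2 * π * k / m : ℝ) * Complex.I) =
      Complex.exp ((2 * π / m : ℝ) * Complex.I) ^ k := by
    rw [← Complex.exp_nat_mul]
    push_cast
    ring_nf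
  have hroot : Complex.exp ((2 * π / m : ℝ) * Complex.I) ^ m = 1 := by
    rcases eq_or_ne m 0 with rfl | hm
    · exact pow_zero _
    · rw [← hpow, mul_div_assoc, div_self (Nat.cast_ne_zero.mpr hm), mul_one,
        Complex.ofReal_mul, Complex.ofReal_ofNat, Complex.exp_two_pi_mul_I]
  have h := sum_range_pow_add_pow_sub_mul_pow_mul (q := (q : ℂ)) hroot
  rw [one_sub_mul_exp_mul_exp_sub] at h
  rw [Complex.ofReal_div, eq_div_iff (Complex.ofReal_ne_zero.mpr hq)]
  apply mul_left_cancel₀ (Complex.exp_ne_zero ((2 * π / m : ℝ) * Complex.I))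
  simp only [hpow]
  push_cast at h ⊢
  linear_combination h

theorem sum_range_pow_add_pow_sub_mul_cos (m : ℕ) {q : ℝ}
    (hq : q ^ 2 - 2 * q * Real.cos (2 * π / m) + 1 ≠ 0) :
    ∑ k ∈ range m, (q ^ k + q ^ (m - k)) * Real.cos (2 * π * k / m) =
      (1 - q ^ m) * (1 - q ^ 2) / (q ^ 2 - 2 * q * Real.cos (2 * π / m) + 1) := by
  simpa only [Complex.re_sum, Complex.re_ofReal_mul, Complex.exp_ofReal_mul_I_re,
    Complex.ofReal_re] using congrArg Complex.re (sum_range_pow_add_pow_sub_mul_exp m hq)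

theorem sum_range_pow_add_pow_sub_mul_sin (m : ℕ) {q : ℝ}
    (hq : q ^ 2 - 2 * q * Real.cos (2 * π / m) + 1 ≠ 0) :
    ∑ k ∈ range m, (q ^ k + q ^ (m - k)) * Real.sin (2 * π * k / m) = 0 := by
  simpa only [Complex.im_sum, Complex.im_ofReal_mul, Complex.exp_ofReal_mul_I_im,
    Complex.ofReal_im] using congrArg Complex.im (sum_range_pow_add_pow_sub_mul_exp m hq)

theorem sum_sum_mul_one_add_mul_cos_sub {ι κ : Type*} (s : Finset ι) (t : Finset κ)
    (a x : ι → ℝ) (b y : κ → ℝ) (ρ : ℝ) {δ : ℝ} (hδ : δ = 1 ∨ δ = -1) :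
    ∑ i ∈ s, ∑ j ∈ t, a i * b j * (1 + ρ * Real.cos (x i - δ * y j)) =
      (∑ i ∈ s, a i) * (∑ j ∈ t, b j) +
        ρ * ((∑ i ∈ s, a i * Real.cos (x i)) * (∑ j ∈ t, b j * Real.cos (y j))) +
        ρ * δ * ((∑ i ∈ s, a i * Real.sin (x i)) * (∑ j ∈ t, b j * Real.sin (y j))) := by
  have hcos (u v : ℝ) :
      Real.cos (u - δ * v) = Real.cos u * Real.cos v + δ * (Real.sin u * Real.sin v) := by
    rcases hδ with rfl | rfl <;> simp [Real.cos_add, sub_eq_add_neg]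
  rw [sum_mul_sum, sum_mul_sum, sum_mul_sum]
  simp only [mul_sum, ← sum_add_distrib]
  refine sum_congr rfl fun i _ => sum_congr rfl fun j _ => ?_
  rw [hcos]
  ring

theorem bwg_normalization_general (m₁ m₂ : ℕ)
    (q s ρ δ : ℝ) (hq0 : 0 < q) (hq1 : q < 1) (hs0 : 0 < s) (hs1 : s < 1)
    (hδ : δ = 1 ∨ δ = -1) :
    (∑ k ∈ Finset.range m₁, ∑ l ∈ Finset.range m₂,
        (q ^ k + q ^ (m₁ - k)) * (s ^ l + s ^ (m₂ - l)) *
          (1 + ρ * Real.cos (2 * π * k / m₁ - δ * (2 * π * l / m₂)))) =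
      (1 - q ^ m₁) * (1 - s ^ m₂) * (1 + q) * (1 + s) *
        (1 / ((1 - q) * (1 - s)) +
          ρ * (1 - q) * (1 - s) /
            ((q ^ 2 - 2 * q * Real.cos (2 * π / m₁) + 1) *
              (s ^ 2 - 2 * s * Real.cos (2 * π / m₂) + 1))) := by
  have hDq := sq_sub_two_mul_mul_cos_add_one_pos (q := q) (by rw [abs_of_pos hq0]; exact hq1.ne)
    (2 * π / m₁)
  have hDs := sq_sub_two_mul_mul_cos_add_one_pos (q := s) (by rw [abs_of_pos hs0]; exact hs1.ne)
    (2 * π / m₂)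
  rw [sum_sum_mul_one_add_mul_cos_sub _ _ (fun k : ℕ => q ^ k + q ^ (m₁ - k))
      (fun k : ℕ => 2 * π * k / m₁) (fun l : ℕ => s ^ l + s ^ (m₂ - l))
      (fun l : ℕ => 2 * π * l / m₂) ρ hδ,
    sum_range_pow_add_pow_sub m₁ hq1.ne, sum_range_pow_add_pow_sub m₂ hs1.ne,
    sum_range_pow_add_pow_sub_mul_cos m₁ hDq.ne', sum_range_pow_add_pow_sub_mul_cos m₂ hDs.ne',
    sum_range_pow_add_pow_sub_mul_sin m₁ hDq.ne']
  have h1q : 1 - q ≠ 0 := sub_ne_zero.mpr hq1.ne'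
  have h1s : 1 - s ≠ 0 := sub_ne_zero.mpr hs1.ne'
  field_simp
  ring

theorem bwg_normalization (m₁ m₂ : ℕ) (hm₁ : 2 ≤ m₁) (hm₂ : 2 ≤ m₂)
    (q s ρ δ : ℝ) (hq0 : 0 < q) (hq1 : q < 1) (hs0 : 0 < s) (hs1 : s < 1)
    (hρ₁ : -1 ≤ ρ) (hρ₂ : ρ ≤ 1) (hδ : δ = 1 ∨ δ = -1) :
    (∑ k ∈ Finset.range m₁, ∑ l ∈ Finset.range m₂,
        (q ^ k + q ^ (m₁ - k)) * (s ^ l + s ^ (m₂ - l)) *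
          (1 + ρ * Real.cos (2 * π * k / m₁ - δ * (2 * π * l / m₂)))) =
      (1 - q ^ m₁) * (1 - s ^ m₂) * (1 + q) * (1 + s) *
        (1 / ((1 - q) * (1 - s)) +
          ρ * (1 - q) * (1 - s) /
            ((q ^ 2 - 2 * q * Real.cos (2 * π / m₁) + 1) *
              (s ^ 2 - 2 * s * Real.cos (2 * π / m₂) + 1))) :=
  bwg_normalization_general m₁ m₂ q s ρ δ hq0 hq1 hs0 hs1 hδ
end

section
/- Let m₁, m₂ ≥ 2 be integers, q, s ∈ (0,1), ρ ∈ [0,1], δ ∈ {−1,1}, α ∈ {0,…,m₁−1}, β ∈ {0,…,m₂−1}. Define f₃(k,l) = (q^{ζ₁} + q^{m₁−ζ₁})(s^{ζ₂} + s^{m₂−ζ₂})·(1 + ρ·cos(2πζ₁/m₁ − δ·2πζ₂/m₂)) with ζ₁ = (k−α) mod m₁ and ζ₂ = (l−β) mod m₂. Then f₃(k,l) < f₃(α,β) for every (k,l) ∈ ({0,…,m₁−1} × {0,…,m₂−1}) \ {(α,β)}. In particular, the BWG distribution with ρ ≥ 0 has a unique dominant mode at (2πα/m₁, 2πβ/m₂).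 -/
open Real Finset

lemma bwg_aux (q : ℝ) (hq0 : 0 < q) (hq1 : q < 1) (m z : ℕ) (hz : 0 < z) (hzm : z < m) :
    q ^ z + q ^ (m - z) < 1 + q ^ m := by
  have hm : q ^ z * q ^ (m - z) = q ^ m := by
    rw [← pow_add]; congr 1; omega
  have h1 : q ^ z < 1 := pow_lt_one₀ hq0.le hq1 hz.ne'
  have h2 : q ^ (m - z) < 1 := pow_lt_one₀ hq0.le hq1 (by omega)
  have h3 : 0 < q ^ z := pow_pos hq0 z
  have h4 : 0 < q ^ (m - z) := pow_pos hq0 _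
  nlinarith [mul_pos (sub_pos.2 h1) (sub_pos.2 h2)]

theorem bwg_unique_mode (m₁ m₂ : ℕ) (hm₁ : 2 ≤ m₁) (hm₂ : 2 ≤ m₂)
    (q s ρ δ : ℝ) (hq0 : 0 < q) (hq1 : q < 1) (hs0 : 0 < s) (hs1 : s < 1)
    (hρ0 : 0 ≤ ρ) (hρ1 : ρ ≤ 1) (hδ : δ = 1 ∨ δ = -1)
    (α β : ℕ) (hα : α < m₁) (hβ : β < m₂)
    (f₃ : ℕ → ℕ → ℝ)
    (hf₃ : ∀ k l, f₃ k l =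
      (q ^ ((((k : ℤ) - α) % m₁).toNat) + q ^ (m₁ - (((k : ℤ) - α) % m₁).toNat)) *
        (s ^ ((((l : ℤ) - β) % m₂).toNat) + s ^ (m₂ - (((l : ℤ) - β) % m₂).toNat)) *
        (1 + ρ * Real.cos (2 * π * ((((k : ℤ) - α) % m₁).toNat) / m₁ -
          δ * (2 * π * ((((l : ℤ) - β) % m₂).toNat) / m₂)))) :
    ∀ k l, k < m₁ → l < m₂ → (k, l) ≠ (α, β) → f₃ k l < f₃ α β := by
  intro k l hk hl hne
  have hαβ : f₃ α β = (1 + q ^ m₁) * (1 + s ^ m₂) * (1 + ρ) := by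
    rw [hf₃]
    simp
  rw [hαβ, hf₃]
  have hmod₁ : (α ≤ k ∧ ((k : ℤ) - α) % m₁ = (k : ℤ) - α) ∨
      (k < α ∧ ((k : ℤ) - α) % m₁ = (k : ℤ) - α + m₁) := by
    rcases le_or_gt (α : ℤ) k with h | h
    · refine Or.inl ⟨by omega, Int.emod_eq_of_lt (by omega) (by omega)⟩
    · refine Or.inr ⟨by omega, ?_⟩
      rw [show ((k:ℤ)-α) % m₁ = ((k:ℤ)-α+m₁) % m₁ from Int.emod_eq_add_self_emod]
      exact Int.emod_eq_of_lt (by omega) (by omega)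
  have hmod₂ : (β ≤ l ∧ ((l : ℤ) - β) % m₂ = (l : ℤ) - β) ∨
      (l < β ∧ ((l : ℤ) - β) % m₂ = (l : ℤ) - β + m₂) := by
    rcases le_or_gt (β : ℤ) l with h | h
    · refine Or.inl ⟨by omega, Int.emod_eq_of_lt (by omega) (by omega)⟩
    · refine Or.inr ⟨by omega, ?_⟩
      rw [show ((l:ℤ)-β) % m₂ = ((l:ℤ)-β+m₂) % m₂ from Int.emod_eq_add_self_emod]
      exact Int.emod_eq_of_lt (by omega) (by omega)
  set z₁ : ℕ := (((k : ℤ) - α) % m₁).toNat with hz₁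
  set z₂ : ℕ := (((l : ℤ) - β) % m₂).toNat with hz₂
  have hz₁lt : z₁ < m₁ := by omega
  have hz₂lt : z₂ < m₂ := by omega
  set θ : ℝ := 2 * π * z₁ / m₁ - δ * (2 * π * z₂ / m₂) with hθ
  have hA0 : (0:ℝ) < q ^ z₁ + q ^ (m₁ - z₁) := by positivity
  have hB0 : (0:ℝ) < s ^ z₂ + s ^ (m₂ - z₂) := by positivity
  have hAle : q ^ z₁ + q ^ (m₁ - z₁) ≤ 1 + q ^ m₁ := by
    rcases Nat.eq_zero_or_pos z₁ with h | h
    · simp [h]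
    · exact (bwg_aux q hq0 hq1 m₁ z₁ h hz₁lt).le
  have hBle : s ^ z₂ + s ^ (m₂ - z₂) ≤ 1 + s ^ m₂ := by
    rcases Nat.eq_zero_or_pos z₂ with h | h
    · simp [h]
    · exact (bwg_aux s hs0 hs1 m₂ z₂ h hz₂lt).le
  have hCle : 1 + ρ * Real.cos θ ≤ 1 + ρ := by
    nlinarith [Real.cos_le_one θ]
  have hC0 : 0 ≤ 1 + ρ * Real.cos θ := by
    nlinarith [Real.neg_one_le_cos θ]
  have hstrict : (q ^ z₁ + q ^ (m₁ - z₁)) * (s ^ z₂ + s ^ (m₂ - z₂)) <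
      (1 + q ^ m₁) * (1 + s ^ m₂) := by
    have hne' : z₁ ≠ 0 ∨ z₂ ≠ 0 := by
      by_contra h
      push_neg at h
      apply hne
      have h1 : k = α := by omega
      have h2 : l = β := by omega
      simp [h1, h2]
    rcases hne' with h | h
    · have hA : q ^ z₁ + q ^ (m₁ - z₁) < 1 + q ^ m₁ :=
        bwg_aux q hq0 hq1 m₁ z₁ (Nat.pos_of_ne_zero h) hz₁lt
      have : (0:ℝ) < 1 + q ^ m₁ := by positivity
      nlinarith
    · have hB : s ^ z₂ + s ^ (m₂ - z₂) < 1 + s ^ m₂ :=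
        bwg_aux s hs0 hs1 m₂ z₂ (Nat.pos_of_ne_zero h) hz₂lt
      have : (0:ℝ) < 1 + s ^ m₂ := by positivity
      nlinarith
  calc (q ^ z₁ + q ^ (m₁ - z₁)) * (s ^ z₂ + s ^ (m₂ - z₂)) * (1 + ρ * Real.cos θ)
      ≤ (q ^ z₁ + q ^ (m₁ - z₁)) * (s ^ z₂ + s ^ (m₂ - z₂)) * (1 + ρ) := by
        exact mul_le_mul_of_nonneg_left hCle (by positivity)
    _ < (1 + q ^ m₁) * (1 + s ^ m₂) * (1 + ρ) := by
        exact mul_lt_mul_of_pos_right hstrict (by linarith)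
end

section
/- Let m₁, m₂ ≥ 2 be integers, q, s ∈ (0,1), ρ ∈ [−1,1], δ ∈ {−1,1}, α = β = 0. Then for each k ∈ {0,…,m₁−1}, the sum over l ∈ {0,…,m₂−1} of the unnormalized BWG mass (q^{k} + q^{m₁−k})(s^{l} + s^{m₂−l})·(1 + ρ·cos(2πk/m₁ − δ·2πl/m₂)) equals ((1−s^{m₂})(1+s)/(1−s)) · (q^k + q^{m₁−k}) · [1 + ρ·((1−s)²/(s² − 2s·cos(2π/m₂) + 1))·cos(2πk/m₁)]. -/
open Real Finset

/-!
For `φ = 2πm/n` with `m ∈ ℤ`, `z = exp (-iφ)` is an `n`-th root of unity. Since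
`z ^ l = z⁻¹ ^ (n - l)`, the sum `∑ (s ^ l + s ^ (n - l)) z ^ l` splits into two geometric sums, in `s z` and in `s z⁻¹`, which add
up to the truncated Poisson kernel `(1 - s ^ n) (1 - s ²) / |1 - s z| ²`. This is real, so
multiplying by `exp (iθ)` and taking real parts gives the cosine sum as a multiple of `cos θ`;
`m = δ = ±1` give the same value because cosine is even, and `z = 1` gives the mass
`∑ (s ^ l + s ^ (n - l))`.
-/

theorem sum_range_pow_sub {R : Type*} [Semiring R] (x : R) (n : ℕ) :
    ∑ l ∈ range n, x ^ (n - l) = x * ∑ l ∈ range n, x ^ l := by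
  rw [← sum_range_reflect, mul_sum]
  refine sum_congr rfl fun l hl => ?_
  rw [← pow_succ']
  congr 1
  have := mem_range.mp hl
  omega

theorem sum_pow_add_pow_sub_mul_pow {K : Type*} [Field K] {n : ℕ} {s z : K} (hz : z ^ n = 1)
    (h₁ : s * z ≠ 1) (h₂ : s * z⁻¹ ≠ 1) :
    ∑ l ∈ range n, (s ^ l + s ^ (n - l)) * z ^ l =
      (1 - s ^ n) * (1 - s ^ 2) / ((1 - s * z) * (1 - s * z⁻¹)) := by
  rcases Nat.eq_zero_or_pos n with rfl | hn
  · simp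
  have hz0 : z ≠ 0 := by rintro rfl; simp [hn.ne'] at hz
  have hrefl : ∀ l ∈ range n, s ^ (n - l) * z ^ l = (s * z⁻¹) ^ (n - l) := fun l hl => by
    rw [mul_pow, inv_pow, pow_sub₀ z hz0 (mem_range.mp hl).le, hz, one_mul, inv_inv]
  have hw₁ : (s * z) ^ n = s ^ n := by rw [mul_pow, hz, mul_one]
  have hw₂ : (s * z⁻¹) ^ n = s ^ n := by rw [mul_pow, inv_pow, hz, inv_one, mul_one]
  simp only [add_mul, sum_add_distrib, sum_congr rfl hrefl, ← mul_pow, sum_range_pow_sub,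
    geom_sum_eq h₁, geom_sum_eq h₂, hw₁, hw₂]
  have hprod : s * z * (s * z⁻¹) = s ^ 2 := by field_simp
  generalize s * z = w at *
  generalize s * z⁻¹ = w' at *
  have : 1 - w ≠ 0 := sub_ne_zero.mpr h₁.symm
  have : 1 - w' ≠ 0 := sub_ne_zero.mpr h₂.symm
  field_simp
  linear_combination (1 - s ^ n) * (w + w' - w * w' - 1) * hprod

theorem sum_pow_add_pow_sub_mul_cos {n : ℕ} {s : ℝ} (hs : |s| < 1) (m : ℤ) (θ : ℝ) :
    ∑ l ∈ range n, (s ^ l + s ^ (n - l)) * cos (θ - m * (2 * π * l / n)) =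
      (1 - s ^ n) * (1 - s ^ 2) / (s ^ 2 - 2 * s * cos (m * (2 * π / n)) + 1) * cos θ := by
  set φ : ℝ := m * (2 * π / n)
  set z : ℂ := Complex.exp ((-φ : ℝ) * Complex.I) with hz_def
  have hz : z ^ n = 1 := by
    rcases eq_or_ne n 0 with rfl | hn
    · exact pow_zero z
    rw [← Complex.exp_nat_mul, ← Complex.exp_int_mul_two_pi_mul_I (-m)]
    congr 1
    simp only [φ]
    push_cast
    field_simp
  have hzinv : z⁻¹ = Complex.exp (φ * Complex.I) := by
    rw [← Complex.exp_neg, Complex.ofReal_neg, neg_mul, neg_neg]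
  have hne_one (w : ℂ) (hw : ‖w‖ = 1) : (s : ℂ) * w ≠ 1 := fun h => by
    have := congrArg norm h
    simp [hw] at this
    linarith
  have hden : (1 - s * z) * (1 - s * z⁻¹) = ((s ^ 2 - 2 * s * cos φ + 1 : ℝ) : ℂ) := by
    have hzz : z * z⁻¹ = 1 := mul_inv_cancel₀ (Complex.exp_ne_zero _)
    calc (1 - s * z) * (1 - s * z⁻¹) = s ^ 2 * (z * z⁻¹) - s * (z⁻¹ + z) + 1 := by ring
      _ = _ := by
        rw [hzz, hzinv, hz_def, Complex.ofReal_neg, ← Complex.two_cos]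
        push_cast
        ring
  have hterm (l : ℕ) : cos (θ - m * (2 * π * l / n)) = (Complex.exp (θ * Complex.I) * z ^ l).re := by
    rw [← Complex.exp_nat_mul, ← Complex.exp_add, ← Complex.exp_ofReal_mul_I_re]
    congr 3
    simp only [φ]
    push_cast
    ring
  have hsum := sum_pow_add_pow_sub_mul_pow (s := (s : ℂ)) hz
    (hne_one z (Complex.norm_exp_ofReal_mul_I _))
    (hne_one z⁻¹ (hzinv ▸ Complex.norm_exp_ofReal_mul_I _))
  rw [hden] at hsum
  calc ∑ l ∈ range n, (s ^ l + s ^ (n - l)) * cos (θ - m * (2 * π * l / n))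
      = (Complex.exp (θ * Complex.I) *
          ∑ l ∈ range n, ((s : ℂ) ^ l + (s : ℂ) ^ (n - l)) * z ^ l).re := by
        simp only [hterm, mul_sum, Complex.re_sum]
        refine sum_congr rfl fun l _ => ?_
        rw [mul_left_comm, ← Complex.re_ofReal_mul]
        push_cast
        rfl
    _ = _ := by
        rw [hsum, mul_comm, ← Complex.exp_ofReal_mul_I_re θ]
        norm_cast
        exact Complex.re_ofReal_mul _ _

theorem bwg_marginal_sum_general (m₁ m₂ : ℕ)
    (q s ρ δ : ℝ) (hs0 : 0 < s) (hs1 : s < 1)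
    (hδ : δ = 1 ∨ δ = -1) :
    ∀ k : ℕ, k < m₁ →
      (∑ l ∈ Finset.range m₂,
          (q ^ k + q ^ (m₁ - k)) * (s ^ l + s ^ (m₂ - l)) *
            (1 + ρ * Real.cos (2 * π * k / m₁ - δ * (2 * π * l / m₂)))) =
        ((1 - s ^ m₂) * (1 + s) / (1 - s)) * (q ^ k + q ^ (m₁ - k)) *
          (1 + ρ * ((1 - s) ^ 2 / (s ^ 2 - 2 * s * Real.cos (2 * π / m₂) + 1)) *
            Real.cos (2 * π * k / m₁)) := by
  intro k _
  have hs : |s| < 1 := abs_lt.mpr ⟨by linarith, hs1⟩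
  have hmass := sum_pow_add_pow_sub_mul_pow (one_pow m₂) (s := s)
    (by simpa using hs1.ne) (by simpa using hs1.ne)
  simp only [one_pow, mul_one, inv_one] at hmass
  obtain ⟨m, rfl, hm⟩ : ∃ m : ℤ, δ = m ∧ cos (m * (2 * π / m₂)) = cos (2 * π / m₂) := by
    rcases hδ with rfl | rfl
    exacts [⟨1, by simp⟩, ⟨-1, by simp⟩]
  have hcos := sum_pow_add_pow_sub_mul_cos (n := m₂) hs m (2 * π * k / m₁)
  rw [hm] at hcos
  have : 1 - s ≠ 0 := sub_ne_zero.mpr hs1.ne'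
  calc _ = (q ^ k + q ^ (m₁ - k)) * ∑ l ∈ range m₂, (s ^ l + s ^ (m₂ - l)) +
        (q ^ k + q ^ (m₁ - k)) * ρ * ∑ l ∈ range m₂, (s ^ l + s ^ (m₂ - l)) *
          cos (2 * π * k / m₁ - m * (2 * π * l / m₂)) := by
        rw [mul_sum, mul_sum, ← sum_add_distrib]
        exact sum_congr rfl fun l _ => by ring
    _ = _ := by
        rw [hmass, hcos]
        field_simp
        ring

theorem bwg_marginal_sum (m₁ m₂ : ℕ) (hm₁ : 2 ≤ m₁) (hm₂ : 2 ≤ m₂)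
    (q s ρ δ : ℝ) (hq0 : 0 < q) (hq1 : q < 1) (hs0 : 0 < s) (hs1 : s < 1)
    (hρ₁ : -1 ≤ ρ) (hρ₂ : ρ ≤ 1) (hδ : δ = 1 ∨ δ = -1) :
    ∀ k : ℕ, k < m₁ →
      (∑ l ∈ Finset.range m₂,
          (q ^ k + q ^ (m₁ - k)) * (s ^ l + s ^ (m₂ - l)) *
            (1 + ρ * Real.cos (2 * π * k / m₁ - δ * (2 * π * l / m₂)))) =
        ((1 - s ^ m₂) * (1 + s) / (1 - s)) * (q ^ k + q ^ (m₁ - k)) *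
          (1 + ρ * ((1 - s) ^ 2 / (s ^ 2 - 2 * s * Real.cos (2 * π / m₂) + 1)) *
            Real.cos (2 * π * k / m₁)) :=
  bwg_marginal_sum_general m₁ m₂ q s ρ δ hs0 hs1 hδ
end
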